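/- Let α ≥ β ≥ −1/2 be real numbers and write p_n^{(α,β)}(x) = P_n^{(α,β)}(x)/P_n^{(α,β)}(1). Then there exist constants δ > 0 and K_1 > 0, depending only on α and β, such that for every integer n ≥ α + β + 1 and every x ∈ [0, π] with 0 ≤ n x ≤ δ, one has 1 − p_n^{(α,β)}(cos x) ≥ K_1 (n x)². -/

import Mathlib

/-- The Jacobi polynomial `P_n^{(α,β)}`. -/
noncomputable def jacobiP (α β : ℝ) (n : ℕ) (x : ℝ) : ℝ :=
  Real.Gamma (α + n + 1) / (n.factorial * Real.Gamma (α + β + n + 1)) *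
    ∑ k ∈ Finset.range (n + 1),
      (n.choose k : ℝ) * (Real.Gamma (α + β + n + k + 1) / Real.Gamma (α + k + 1)) *
        ((x - 1) / 2) ^ k

/-!
Put `s = sin (x / 2)`. Expanding at `1`, `p_n^{(α,β)}(cos x) = ∑ₖ (-1)ᵏ cₖ` with
`cₖ = C(n,k) (n+α+β+1)ₖ / (α+1)ₖ · s^{2k} ≥ 0`. The linear term is `c₁ ≥ (n s)² / (α + 1)`,
while crude bounds on each factor give `cₖ ≤ uᵏ / k!` with `u = 6 (n s)²`, so the terms of
order `≥ 2` add up to at most `exp u - 1 - u ≤ u²`. For `n s` small the linear term therefore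
dominates, and Jordan's inequality `sin (x / 2) ≥ x / π` turns `(n s)²` into `(n x / π)²`.
-/

open Finset Real
open scoped Nat

theorem Real.Gamma_add_nat_eq_prod_mul {x : ℝ} (hx : 0 < x) (k : ℕ) :
    Gamma (x + k) = (∏ j ∈ range k, (x + j)) * Gamma x := by
  induction k with
  | zero => simp
  | succ k ih =>
    rw [Nat.cast_succ, ← add_assoc, Gamma_add_one (by positivity), ih, prod_range_succ]
    ring

theorem Real.div_pi_le_sin_half {x : ℝ} (hx0 : 0 ≤ x) (hxπ : x ≤ π) : x / π ≤ sin (x / 2) := by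
  have := mul_le_sin (x := x / 2) (by linarith) (by linarith)
  rwa [show 2 / π * (x / 2) = x / π by ring] at this

theorem sum_Ico_two_pow_div_factorial_le_sq {u : ℝ} (hu0 : 0 ≤ u) (hu1 : u ≤ 1) (n : ℕ) :
    ∑ k ∈ Ico 2 n, u ^ k / k ! ≤ u ^ 2 :=
  calc ∑ k ∈ Ico 2 n, u ^ k / k !
      ≤ ∑ k ∈ Ico 2 (n + 2), u ^ k / k ! :=
        sum_le_sum_of_subset_of_nonneg (Ico_subset_Ico_right (by omega))
          fun _ _ _ => by positivity
    _ = (∑ k ∈ range (n + 2), u ^ k / k !) - 1 - u := by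
        rw [← sum_range_add_sum_Ico _ (show 2 ≤ n + 2 by omega)]
        simp only [sum_range_succ, range_one, sum_singleton, pow_zero, Nat.factorial_zero,
          Nat.cast_one, div_one, pow_one, Nat.factorial_one]
        ring
    _ ≤ exp u - 1 - u := by linarith [sum_le_exp_of_nonneg hu0 (n + 2)]
    _ ≤ u ^ 2 := (le_abs_self _).trans (abs_exp_sub_one_sub_id_le (by rwa [abs_of_nonneg hu0]))

theorem sub_sum_Ico_le_one_sub_sum_neg_one_pow_mul {c : ℕ → ℝ} (hc0 : c 0 = 1)
    (hc : ∀ k, 0 ≤ c k) {n : ℕ} (hn : 1 ≤ n) :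
    c 1 - ∑ k ∈ Ico 2 (n + 1), c k ≤ 1 - ∑ k ∈ range (n + 1), (-1) ^ k * c k := by
  rw [← sum_range_add_sum_Ico _ (show 2 ≤ n + 1 by omega)]
  have hle : ∑ k ∈ Ico 2 (n + 1), (-1) ^ k * c k ≤ ∑ k ∈ Ico 2 (n + 1), c k :=
    sum_le_sum fun k _ => (le_abs_self _).trans_eq (by simp [abs_of_nonneg (hc k)])
  simp only [sum_range_succ, sum_range_zero, hc0]
  linarith

/-- `(n + α + β + 1)ₖ / (α + 1)ₖ`, the coefficient of `C(n,k) ((x - 1) / 2) ^ k` in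
`P_n^{(α,β)}(x) / P_n^{(α,β)}(1)`. -/
noncomputable def jacobiCoeff (α β : ℝ) (n k : ℕ) : ℝ :=
  ∏ j ∈ range k, (α + β + n + 1 + j) / (α + 1 + j)

section
variable {α β : ℝ} {n : ℕ}

theorem jacobiCoeff_zero : jacobiCoeff α β n 0 = 1 := by simp [jacobiCoeff]

theorem jacobiCoeff_one : jacobiCoeff α β n 1 = (α + β + n + 1) / (α + 1) := by
  simp [jacobiCoeff]

theorem jacobiCoeff_pos (hα : 0 < α + 1) (hn : 0 < α + β + n + 1) (k : ℕ) :
    0 < jacobiCoeff α β n k :=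
  prod_pos fun j _ => div_pos (by linarith [j.cast_nonneg (α := ℝ)])
    (by linarith [j.cast_nonneg (α := ℝ)])

theorem jacobiCoeff_le (hα : -1 / 2 ≤ α) (hn0 : 0 < α + β + n + 1) (hn : α + β + 1 ≤ n)
    {k : ℕ} (hk : k ≤ n) : jacobiCoeff α β n k ≤ (6 * n) ^ k :=
  calc jacobiCoeff α β n k ≤ ∏ _j ∈ range k, (6 * n : ℝ) := by
        refine prod_le_prod (fun j _ => ?_) fun j hj => ?_
        · exact div_nonneg (by linarith [j.cast_nonneg (α := ℝ)])
            (by linarith [j.cast_nonneg (α := ℝ)])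
        have hjn : (j : ℝ) + 1 ≤ n := by exact_mod_cast (mem_range.1 hj).trans_le hk
        rw [div_le_iff₀ (by linarith [j.cast_nonneg (α := ℝ)])]
        nlinarith
    _ = (6 * n) ^ k := by simp

theorem choose_mul_jacobiCoeff_mul_pow_le (hα : -1 / 2 ≤ α) (hn0 : 0 < α + β + n + 1)
    (hn : α + β + 1 ≤ n) {k : ℕ} (hk : k ≤ n) {t : ℝ} (ht : 0 ≤ t) :
    n.choose k * jacobiCoeff α β n k * t ^ k ≤ (6 * n ^ 2 * t) ^ k / k ! :=
  calc n.choose k * jacobiCoeff α β n k * t ^ k ≤ (n ^ k / k !) * (6 * n) ^ k * t ^ k := by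
        have := jacobiCoeff_pos (by linarith) hn0 k
        gcongr
        exacts [Nat.choose_le_pow_div k n, jacobiCoeff_le hα hn0 hn hk]
    _ = (6 * n ^ 2 * t) ^ k / k ! := by ring

theorem jacobiP_eq_mul_sum (hα : 0 < α + 1) (hn : 0 < α + β + n + 1) (y : ℝ) :
    jacobiP α β n y = Gamma (α + n + 1) / (n ! * Gamma (α + 1)) *
      ∑ k ∈ range (n + 1), n.choose k * jacobiCoeff α β n k * ((y - 1) / 2) ^ k := by
  have hGamma : ∀ k : ℕ, Gamma (α + β + n + k + 1) / Gamma (α + k + 1) =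
      Gamma (α + β + n + 1) / Gamma (α + 1) * jacobiCoeff α β n k := by
    intro k
    rw [show α + β + n + k + 1 = α + β + n + 1 + k by ring, show α + k + 1 = α + 1 + k by ring,
      Gamma_add_nat_eq_prod_mul hn, Gamma_add_nat_eq_prod_mul hα, jacobiCoeff, prod_div_distrib]
    have := (Gamma_pos_of_pos hα).ne'
    have := (Gamma_pos_of_pos hn).ne'
    have : ∏ j ∈ range k, (α + 1 + j) ≠ 0 :=
      prod_ne_zero_iff.2 fun j _ => by linarith [j.cast_nonneg (α := ℝ)]
    field_simp
  have := (Gamma_pos_of_pos hn).ne'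
  simp_rw [jacobiP, hGamma, mul_sum]
  refine sum_congr rfl fun k _ => ?_
  field_simp

theorem jacobiP_one (hα : 0 < α + 1) (hn : 0 < α + β + n + 1) :
    jacobiP α β n 1 = Gamma (α + n + 1) / (n ! * Gamma (α + 1)) := by
  rw [jacobiP_eq_mul_sum hα hn, sum_range_succ', sum_eq_zero fun k _ => by simp]
  simp [jacobiCoeff_zero]

theorem jacobiP_div_jacobiP_one (hα : 0 < α + 1) (hn : 0 < α + β + n + 1) (y : ℝ) :
    jacobiP α β n y / jacobiP α β n 1 =
      ∑ k ∈ range (n + 1), n.choose k * jacobiCoeff α β n k * ((y - 1) / 2) ^ k := by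
  have : 0 < Gamma (α + n + 1) / (n ! * Gamma (α + 1)) := by
    have := Gamma_pos_of_pos (show 0 < α + n + 1 by linarith [n.cast_nonneg (α := ℝ)])
    have := Gamma_pos_of_pos hα
    positivity
  rw [jacobiP_eq_mul_sum hα hn, jacobiP_one hα hn, mul_div_cancel_left₀ _ this.ne']

theorem sq_div_sub_le_one_sub_jacobiP_cos_div (hα : -1 / 2 ≤ α) (hαβ : 0 ≤ α + β + 1)
    (hn : α + β + 1 ≤ n) (hn1 : 1 ≤ n) {x : ℝ} (hx : 6 * (n * sin (x / 2)) ^ 2 ≤ 1) :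
    (n * sin (x / 2)) ^ 2 / (α + 1) - 36 * (n * sin (x / 2)) ^ 4 ≤
      1 - jacobiP α β n (cos x) / jacobiP α β n 1 := by
  set s := sin (x / 2)
  have hα1 : 0 < α + 1 := by linarith
  have hn0 : 0 < α + β + n + 1 := by linarith [(Nat.one_le_cast (α := ℝ)).2 hn1]
  set c : ℕ → ℝ := fun k => n.choose k * jacobiCoeff α β n k * (s ^ 2) ^ k
  have hc : ∀ k, 0 ≤ c k := fun k => by have := jacobiCoeff_pos hα1 hn0 k; positivity
  have hcos : (cos x - 1) / 2 = -s ^ 2 := by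
    have := sin_sq_eq_half_sub (x / 2)
    rw [mul_div_cancel₀ x two_ne_zero] at this
    linarith
  have hp : jacobiP α β n (cos x) / jacobiP α β n 1 = ∑ k ∈ range (n + 1), (-1) ^ k * c k := by
    rw [jacobiP_div_jacobiP_one hα1 hn0, hcos]
    exact sum_congr rfl fun k _ => by rw [neg_pow]; ring
  have hc1 : (n * s) ^ 2 / (α + 1) ≤ c 1 := by
    simp only [c, jacobiCoeff_one, Nat.choose_one_right]
    rw [div_le_iff₀ hα1]
    field_simp
    nlinarith [sq_nonneg s]
  have htail : ∑ k ∈ Ico 2 (n + 1), c k ≤ 36 * (n * s) ^ 4 :=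
    calc ∑ k ∈ Ico 2 (n + 1), c k ≤ ∑ k ∈ Ico 2 (n + 1), (6 * n ^ 2 * s ^ 2) ^ k / k ! :=
          sum_le_sum fun k hk => choose_mul_jacobiCoeff_mul_pow_le hα hn0 hn
            (Nat.lt_succ_iff.1 (mem_Ico.1 hk).2) (sq_nonneg s)
      _ ≤ (6 * n ^ 2 * s ^ 2) ^ 2 :=
          sum_Ico_two_pow_div_factorial_le_sq (by positivity) (by linarith) _
      _ = 36 * (n * s) ^ 4 := by ring
  rw [hp]
  linarith [sub_sum_Ico_le_one_sub_sum_neg_one_pow_mul (c := c) (by simp [c, jacobiCoeff_zero])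
    hc hn1]

end

theorem sq_div_two_mul_le_sq_div_sub {a t : ℝ} (ha : 1 / 2 ≤ a) (ht : 0 ≤ t)
    (hat : 12 * a * t ≤ 1) : t ^ 2 / (2 * a) ≤ t ^ 2 / a - 36 * t ^ 4 := by
  have h72 : 72 * a * t ^ 2 ≤ 1 := by nlinarith
  have : 36 * t ^ 4 ≤ t ^ 2 / (2 * a) := by
    rw [le_div_iff₀ (by positivity)]
    nlinarith [sq_nonneg t]
  have : t ^ 2 / a = 2 * (t ^ 2 / (2 * a)) := by field_simp
  linarith

/-- lower quadratic bound `1 − p_n^{(α,β)}(cos x) ≥ K₁ (n x)²` for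
n ≥ α + β + 1 and 0 ≤ n x ≤ δ, with δ, K₁ > 0 depending only on α and β. -/
theorem stmt6 (α β : ℝ) (hβ : -1/2 ≤ β) (hαβ : β ≤ α) :
    ∃ δ > 0, ∃ K₁ > 0, ∀ n : ℕ, α + β + 1 ≤ (n:ℝ) →
      ∀ x ∈ Set.Icc (0:ℝ) Real.pi, (n:ℝ) * x ≤ δ →
        K₁ * ((n:ℝ) * x)^2 ≤ 1 - jacobiP α β n (Real.cos x) / jacobiP α β n 1 := by
  have hα : -1 / 2 ≤ α := hβ.trans hαβ
  have hα1 : 0 < α + 1 := by linarith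
  refine ⟨1 / (6 * (α + 1)), by positivity, 1 / (2 * (α + 1) * π ^ 2), by positivity,
    fun n hn x ⟨hx0, hxπ⟩ hδ => ?_⟩
  rcases Nat.eq_zero_or_pos n with rfl | hn1
  · simpa [jacobiP] using div_self_le_one _
  set t := n * sin (x / 2)
  have ht_lower : n * x / π ≤ t := by
    rw [mul_div_assoc]
    exact mul_le_mul_of_nonneg_left (div_pi_le_sin_half hx0 hxπ) n.cast_nonneg
  have ht_upper : 12 * (α + 1) * t ≤ 1 := by
    have := sin_le (show 0 ≤ x / 2 by linarith)
    have : t ≤ n * x / 2 := by simp only [t]; rw [mul_div_assoc]; gcongr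
    rw [le_div_iff₀ (by positivity)] at hδ
    nlinarith
  have ht0 : 0 ≤ n * x / π := by positivity
  calc 1 / (2 * (α + 1) * π ^ 2) * (n * x) ^ 2 = (n * x / π) ^ 2 / (2 * (α + 1)) := by
        field_simp
    _ ≤ t ^ 2 / (2 * (α + 1)) := by gcongr
    _ ≤ t ^ 2 / (α + 1) - 36 * t ^ 4 :=
        sq_div_two_mul_le_sq_div_sub (by linarith) (ht0.trans ht_lower) ht_upper
    _ ≤ _ := sq_div_sub_le_one_sub_jacobiP_cos_div hα (by linarith) hn hn1 (by nlinarith)
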